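/- For every n ∈ ℕ and every f ∈ H^{(1,1)}(Ω), the function C_φ^n f lies in the domain of D_y and D_y (C_φ^n f) = 2n C_φ^n (D_x f) + C_φ^n (D_y f). -/

import Mathlib

open MeasureTheory Complex Filter Topology

noncomputable section

instance : Fact (0 < 2 * Real.pi) := ⟨by positivity⟩
instance : Fact (0 < Real.pi) := ⟨Real.pi_pos⟩

/-- The phase space `Ω = (ℝ/2πℤ) × (ℝ/πℤ)`. -/
abbrev Omg : Type := AddCircle (2 * Real.pi) × AddCircle Real.pi

/-- The normalised Lebesgue measure `dm = dx dy / (2π²)` on `Ω`. -/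
def mOmg : Measure Omg := (ENNReal.ofReal (2 * Real.pi ^ 2))⁻¹ • volume

/-- The Fourier basis functions `e_k(x,y) = exp(i k₁ x) exp(2 i k₂ y)`. -/
def eB (k : ℤ × ℤ) : Omg → ℂ := fun p => fourier k.1 p.1 * fourier k.2 p.2

/-- Fourier coefficient `c_k(f) = (f, e_k)_{L²}`. -/
def coef (k : ℤ × ℤ) (f : Omg → ℂ) : ℂ := ∫ p, f p * (starRingEnd ℂ) (eB k p) ∂mOmg

/-- Sobolev weight `a_s(k) = 1 + |k₁|^{2s₁} + |2k₂|^{2s₂}` (real exponents). -/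
def aW (s : ℝ × ℝ) (k : ℤ × ℤ) : ℝ :=
  1 + |(k.1 : ℝ)| ^ (2 * s.1) + |2 * (k.2 : ℝ)| ^ (2 * s.2)

/-- Membership in the Sobolev space `H^s(Ω)`. -/
def MemHs (s : ℝ × ℝ) (f : Omg → ℂ) : Prop :=
  MemLp f 2 mOmg ∧ Summable (fun k => aW s k * ‖coef k f‖ ^ 2)

/-- The Sobolev norm `‖f‖_{H^s}`. -/
def normHs (s : ℝ × ℝ) (f : Omg → ℂ) : ℝ :=
  Real.sqrt (∑' k, aW s k * ‖coef k f‖ ^ 2)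

/-- The doubling map `ℝ/πℤ → ℝ/2πℤ`, `y ↦ 2y`. -/
def dbl : AddCircle Real.pi → AddCircle (2 * Real.pi) :=
  AddCircle.equivAddCircle Real.pi (2 * Real.pi) Real.pi_ne_zero (by positivity)

/-- The inverse billiard collision map `φ(x,y) = (x - π + 2y, y)`. -/
def phi : Omg → Omg :=
  fun p => (p.1 - ((Real.pi : ℝ) : AddCircle (2 * Real.pi)) + dbl p.2, p.2)

/-- The composition operator `(C_φ f)(x,y) = f(φ(x,y))`. -/
def Cphi : (Omg → ℂ) → (Omg → ℂ) := fun f p => f (phi p)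

/-- The multiplication operator `(M_w f)(x,y) = w(x,y) f(x,y)`. -/
def Mw (w : Omg → ℝ) : (Omg → ℂ) → (Omg → ℂ) := fun f p => (w p : ℂ) * f p

/-- The transfer operator `L = M_w C_φ`. -/
def Lop (w : Omg → ℝ) : (Omg → ℂ) → (Omg → ℂ) := fun f => Mw w (Cphi f)

/-- The frequency cut-off set `Λ_K = {k : |k₁| < K, |k₂| < K}`. -/
def Lam (K : ℕ) : Finset (ℤ × ℤ) := Finset.Ioo (-(K : ℤ)) (K : ℤ) ×ˢ Finset.Ioo (-(K : ℤ)) (K : ℤ)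

/-- The Fourier projection `P_Λ f = ∑_{k ∈ Λ} c_k(f) e_k`. -/
def PL (Λ : Finset (ℤ × ℤ)) : (Omg → ℂ) → (Omg → ℂ) :=
  fun f p => ∑ k ∈ Λ, coef k f * eB k p

/-- The finite-rank approximation `L_K = P_K M_w C_φ P_K`. -/
def LK (w : Omg → ℝ) (K : ℕ) : (Omg → ℂ) → (Omg → ℂ) :=
  fun f => PL (Lam K) (Lop w (PL (Lam K) f))

/-- Operator norm of a map `T`, viewed from `H^s` to `H^t`. -/
def opN (s t : ℝ × ℝ) (T : (Omg → ℂ) → (Omg → ℂ)) : ℝ :=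
  sInf {M : ℝ | 0 ≤ M ∧ ∀ f, MemHs s f → normHs t (T f) ≤ M * normHs s f}

/-- `‖w‖_∞` for a (positive bounded) weight. -/
def wSup (w : Omg → ℝ) : ℝ := sSup (Set.range w)

/-- The standing assumptions on the weight `w`: smooth, positive, bounded away from
zero, `‖w‖_∞ < 1`, and independent of the first argument. -/
structure GoodWeight (w : Omg → ℝ) : Prop where
  pos : ∀ p, 0 < w p
  smooth : ∃ W : ℝ → ℝ, ContDiff ℝ (⊤ : ℕ∞) W ∧
    ∀ (x : AddCircle (2 * Real.pi)) (y : ℝ), w (x, (y : AddCircle Real.pi)) = W y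
  bdd_below : ∃ ε > 0, ∀ p, ε ≤ w p
  lt_one : sSup (Set.range w) < 1
  indep : ∀ (x x' : AddCircle (2 * Real.pi)) (y : AddCircle Real.pi), w (x, y) = w (x', y)

/-- The matrix `A = [[1,0],[1,1]]` acting on frequencies `(k₁,k₂) ↦ (k₁, k₁+k₂)`. -/
def Amap : ℤ × ℤ → ℤ × ℤ := fun k => (k.1, k.1 + k.2)

/-- `IsD i j f g` : `g = D_x^i D_y^j f` in the weak (Fourier) sense, both in `L²`. -/
def IsD (i j : ℕ) (f g : Omg → ℂ) : Prop :=
  MemLp f 2 mOmg ∧ MemLp g 2 mOmg ∧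
    ∀ k : ℤ × ℤ, coef k g = (Complex.I * (k.1 : ℂ)) ^ i * (2 * Complex.I * (k.2 : ℂ)) ^ j * coef k f

/-! `φ` is a skew product of rotations, hence preserves `m`, and a direct computation gives
`e_k = (-1)^{k₁} · e_{(k₁, k₂ - k₁)} ∘ φ`. A change of variables therefore shows that `C_φ`
acts on Fourier coefficients by a shear, `c_k(C_φ^n f) = (-1)^{n k₁} c_{(k₁, k₂ - n k₁)}(f)`,
and the claim becomes the coefficientwise identity `2i k₂ = 2n · i k₁ + 2i (k₂ - n k₁)`. -/

lemma continuous_dbl : Continuous dbl :=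
  (AddCircle.homeomorphAddCircle Real.pi (2 * Real.pi) Real.pi_ne_zero (by positivity)).continuous

lemma continuous_eB (k : ℤ × ℤ) : Continuous (eB k) :=
  ((map_continuous (fourier k.1)).comp continuous_fst).mul
    ((map_continuous (fourier k.2)).comp continuous_snd)

lemma norm_eB (k : ℤ × ℤ) (p : Omg) : ‖eB k p‖ = 1 := by
  simp only [eB, norm_mul, fourier_apply, Circle.norm_coe, mul_one]

instance : IsFiniteMeasure mOmg := by
  constructor
  rw [mOmg, Measure.smul_apply, smul_eq_mul]
  exact ENNReal.mul_lt_top (by simp; positivity) (measure_lt_top _ _)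

lemma measurePreserving_phi_volume : MeasurePreserving phi (volume : Measure Omg) volume := by
  let shear (q : AddCircle Real.pi × AddCircle (2 * Real.pi)) :
      AddCircle Real.pi × AddCircle (2 * Real.pi) :=
    (q.1, q.2 + (dbl q.1 - ((Real.pi : ℝ) : AddCircle (2 * Real.pi))))
  have hshear : MeasurePreserving shear (volume.prod volume) (volume.prod volume) :=
    (MeasurePreserving.id _).skew_product
      (g := fun a c => c + (dbl a - ((Real.pi : ℝ) : AddCircle (2 * Real.pi))))
      (measurable_snd.add ((continuous_dbl.comp continuous_fst).measurable.sub measurable_const))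
      (Eventually.of_forall fun _ => map_add_right_eq_self _ _)
  have hphi : phi = Prod.swap ∘ shear ∘ Prod.swap := by
    funext p
    ext
    · show p.1 - _ + dbl p.2 = p.1 + (dbl p.2 - _)
      abel
    · rfl
  rw [hphi, Measure.volume_eq_prod]
  exact Measure.measurePreserving_swap.comp (hshear.comp Measure.measurePreserving_swap)

lemma measurePreserving_phi : MeasurePreserving phi mOmg mOmg :=
  ⟨measurePreserving_phi_volume.measurable, by
    rw [mOmg, Measure.map_smul, measurePreserving_phi_volume.map_eq]⟩

lemma eB_eq_neg_one_zpow_mul_eB_phi (k : ℤ × ℤ) (p : Omg) :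
    eB k p = (-1 : ℂ) ^ k.1 * eB (k.1, k.2 - k.1) (phi p) := by
  obtain ⟨x, y⟩ := p
  induction x using QuotientAddGroup.induction_on with | H a => ?_
  induction y using QuotientAddGroup.induction_on with | H b => ?_
  have hphi : phi ((a : AddCircle (2 * Real.pi)), (b : AddCircle Real.pi)) =
      (((a - Real.pi + b * (Real.pi⁻¹ * (2 * Real.pi)) : ℝ) : AddCircle (2 * Real.pi)),
        (b : AddCircle Real.pi)) := by
    simp only [phi, dbl, AddCircle.equivAddCircle_apply_mk]
    rfl
  have hsign : (-1 : ℂ) ^ k.1 = Complex.exp (k.1 * (Real.pi * Complex.I)) := by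
    rw [Complex.exp_int_mul, Complex.exp_pi_mul_I]
  rw [hphi, hsign]
  simp only [eB, fourier_coe_apply, ← Complex.exp_add]
  congr 1
  have hπ : (Real.pi : ℂ) ≠ 0 := by exact_mod_cast Real.pi_ne_zero
  push_cast
  field_simp
  ring

lemma integrable_mul_conj_eB {f : Omg → ℂ} (hf : Integrable f mOmg) (k : ℤ × ℤ) :
    Integrable (fun p => f p * starRingEnd ℂ (eB k p)) mOmg :=
  hf.mul_bdd (continuous_star.comp (continuous_eB k)).aestronglyMeasurable
    (Eventually.of_forall fun p => (RCLike.norm_conj _).trans_le (norm_eB k p).le)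

lemma coef_const_mul_add (a : ℂ) {A B : Omg → ℂ} (hA : Integrable A mOmg)
    (hB : Integrable B mOmg) (k : ℤ × ℤ) :
    coef k (fun p => a * A p + B p) = a * coef k A + coef k B := by
  simp only [coef, add_mul, mul_assoc]
  rw [integral_add ((integrable_mul_conj_eB hA k).const_mul a) (integrable_mul_conj_eB hB k),
    integral_const_mul]

lemma coef_Cphi {f : Omg → ℂ} (hf : AEStronglyMeasurable f mOmg) (k : ℤ × ℤ) :
    coef k (Cphi f) = (-1 : ℂ) ^ k.1 * coef (k.1, k.2 - k.1) f := by
  let g : Omg → ℂ := fun q => (-1 : ℂ) ^ k.1 * (f q * starRingEnd ℂ (eB (k.1, k.2 - k.1) q))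
  have hg : AEStronglyMeasurable g mOmg :=
    aestronglyMeasurable_const.mul
      (hf.mul (continuous_star.comp (continuous_eB _)).aestronglyMeasurable)
  have hintegrand : ∀ p, Cphi f p * starRingEnd ℂ (eB k p) = g (phi p) := fun p => by
    rw [eB_eq_neg_one_zpow_mul_eB_phi k p, map_mul, map_zpow₀]
    simp only [Cphi, g, map_neg, map_one]
    ring
  calc coef k (Cphi f) = ∫ p, g (phi p) ∂mOmg := integral_congr_ae (.of_forall hintegrand)
    _ = ∫ q, g q ∂mOmg := by
      rw [← integral_map measurePreserving_phi.aemeasurable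
        (by rwa [measurePreserving_phi.map_eq]), measurePreserving_phi.map_eq]
    _ = (-1 : ℂ) ^ k.1 * coef (k.1, k.2 - k.1) f := integral_const_mul _ _

lemma Cphi_iterate (n : ℕ) (f : Omg → ℂ) : Cphi^[n] f = f ∘ phi^[n] := by
  induction n generalizing f with
  | zero => rfl
  | succ n ih =>
    rw [Function.iterate_succ_apply', ih, Function.iterate_succ]
    rfl

lemma aestronglyMeasurable_Cphi_iterate {f : Omg → ℂ} (hf : AEStronglyMeasurable f mOmg)
    (n : ℕ) :
    AEStronglyMeasurable (Cphi^[n] f) mOmg := by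
  rw [Cphi_iterate]
  exact hf.comp_measurePreserving (measurePreserving_phi.iterate n)

lemma memLp_Cphi_iterate {p : ENNReal} {f : Omg → ℂ} (hf : MemLp f p mOmg) (n : ℕ) :
    MemLp (Cphi^[n] f) p mOmg := by
  rw [Cphi_iterate]
  exact hf.comp_measurePreserving (measurePreserving_phi.iterate n)

lemma coef_Cphi_iterate {f : Omg → ℂ} (hf : AEStronglyMeasurable f mOmg) (n : ℕ)
    (k : ℤ × ℤ) :
    coef k (Cphi^[n] f) = (-1 : ℂ) ^ (n * k.1) * coef (k.1, k.2 - n * k.1) f := by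
  induction n generalizing k with
  | zero => simp
  | succ n ih =>
    rw [Function.iterate_succ_apply', coef_Cphi (aestronglyMeasurable_Cphi_iterate hf n), ih,
      ← mul_assoc, ← zpow_add₀ (by norm_num : (-1 : ℂ) ≠ 0)]
    push_cast
    ring_nf

theorem stmt15_general (n : ℕ) (f fx fy : Omg → ℂ)
    (hfx : IsD 1 0 f fx) (hfy : IsD 0 1 f fy) :
    IsD 0 1 (Cphi^[n] f) (fun p => 2 * (n : ℂ) * Cphi^[n] fx p + Cphi^[n] fy p) := by
  obtain ⟨hf, hfx, hcoef_fx⟩ := hfx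
  obtain ⟨-, hfy, hcoef_fy⟩ := hfy
  have hfxn := memLp_Cphi_iterate hfx n
  have hfyn := memLp_Cphi_iterate hfy n
  refine ⟨memLp_Cphi_iterate hf n, (hfxn.const_mul _).add hfyn, fun k => ?_⟩
  rw [coef_const_mul_add _ (hfxn.integrable one_le_two) (hfyn.integrable one_le_two),
    coef_Cphi_iterate hf.1, coef_Cphi_iterate hfx.1, coef_Cphi_iterate hfy.1,
    hcoef_fx, hcoef_fy]
  push_cast
  ring

/-- Lemma 2.4(iv): `D_y C_φ^n = 2n C_φ^n D_x + C_φ^n D_y` on `H^{(1,1)}`. -/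
theorem stmt15 (n : ℕ) (hn : 1 ≤ n) (f fx fy : Omg → ℂ)
    (hf : MemHs (1, 1) f) (hfx : IsD 1 0 f fx) (hfy : IsD 0 1 f fy) :
    IsD 0 1 (Cphi^[n] f) (fun p => 2 * (n : ℂ) * Cphi^[n] fx p + Cphi^[n] fy p) :=
  stmt15_general n f fx fy hfx hfy

end
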